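/- arXiv:2312.17145 — 7 statements merged into one kernel-verified Lean document; each statement's English description precedes it below -/
import Mathlib

section
/- Let R be a ring, S a localizable subset of R with ass_R(S) = a, and b an ideal of R with b ⊆ a. Let π_b : R → R/b be the quotient map and S̄ = π_b(S). Then S̄ is a localizable subset of R/b with ass_{R/b}(S̄) = a/b, and (R/b)⟨S̄⁻¹⟩ is R-isomorphic to R⟨S⁻¹⟩. -/
universe u

/-- `σ : R →+* A` presents `A` as the universal localization `R⟨S⁻¹⟩` of the ring `R` at the
subset `S`. -/
def IsUniversalLocalization {R A : Type u} [Ring R] [Ring A] (σ : R →+* A) (S : Set R) : Prop :=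
  (∀ s ∈ S, IsUnit (σ s)) ∧
  ∀ (B : Type u) [Ring B], ∀ f : R →+* B, (∀ s ∈ S, IsUnit (f s)) →
    ∃! g : A →+* B, g.comp σ = f

/-- Let `S` be a localizable subset of `R` with `ass_R(S) = a = ker σ_S`, and
`b ⊆ a` an ideal. Let `π : R → R/b` be the quotient map (presented as a surjection with kernel
`b`) and `S̄ = π(S)`. Then `S̄` is localizable in `R/b`, `ass_{R/b}(S̄) = a/b` (i.e. the image
of `a`), and `(R/b)⟨S̄⁻¹⟩` is `R`-isomorphic to `R⟨S⁻¹⟩`. -/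
theorem localization_along_quotient {R A R' A₂ : Type u} [Ring R] [Ring A] [Ring R'] [Ring A₂]
    (S : Set R) (σ : R →+* A) (h : IsUniversalLocalization σ S) (hA : Nontrivial A)
    (b : Ideal R) (hba : ∀ x ∈ b, σ x = 0)
    (π : R →+* R') (hπ : Function.Surjective π) (hπker : ∀ x, π x = 0 ↔ x ∈ b)
    (τ : R' →+* A₂) (hτ : IsUniversalLocalization τ (π '' S)) :
    Nontrivial A₂ ∧
    (∀ y : R', τ y = 0 ↔ ∃ x : R, π x = y ∧ σ x = 0) ∧
    ∃ e : A₂ ≃+* A, (e : A₂ →+* A).comp (τ.comp π) = σ := by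
  -- σ factors through π since ker π = b ⊆ ker σ
  have hker : RingHom.ker π ≤ RingHom.ker σ := by
    intro x hx
    rw [RingHom.mem_ker] at hx ⊢
    exact hba x ((hπker x).mp hx)
  set σ' : R' →+* A := π.liftOfSurjective hπ ⟨σ, hker⟩ with hσ'def
  have hσ'π : ∀ x : R, σ' (π x) = σ x := fun x =>
    π.liftOfRightInverse_comp_apply _ _ ⟨σ, hker⟩ x
  -- σ' inverts π '' S
  have hσ'units : ∀ s ∈ π '' S, IsUnit (σ' s) := by
    rintro _ ⟨x, hx, rfl⟩
    rw [hσ'π]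
    exact h.1 x hx
  -- τ ∘ π inverts S
  have hτπunits : ∀ s ∈ S, IsUnit ((τ.comp π) s) := fun s hs =>
    hτ.1 (π s) ⟨s, hs, rfl⟩
  obtain ⟨g, hg, hguniq⟩ := hτ.2 A σ' hσ'units
  obtain ⟨f, hf, hfuniq⟩ := h.2 A₂ (τ.comp π) hτπunits
  have hgτ : ∀ y, g (τ y) = σ' y := fun y => by simpa using RingHom.congr_fun hg y
  have hfσ : ∀ x, f (σ x) = τ (π x) := fun x => by simpa using RingHom.congr_fun hf x
  -- g ∘ f = id
  have hgf : g.comp f = RingHom.id A := by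
    obtain ⟨k, _, hkuniq⟩ := h.2 A σ h.1
    have h1 : (g.comp f).comp σ = σ := by
      rw [RingHom.comp_assoc, hf, ← RingHom.comp_assoc, hg]
      exact RingHom.ext hσ'π
    have h2 : (RingHom.id A).comp σ = σ := RingHom.id_comp σ
    rw [hkuniq _ h1, hkuniq _ h2]
  -- f ∘ g = id
  have hfσ' : f.comp σ' = τ := by
    ext y
    obtain ⟨x, rfl⟩ := hπ y
    simp only [RingHom.comp_apply]
    rw [hσ'π, hfσ]
  have hfg : f.comp g = RingHom.id A₂ := by
    obtain ⟨k, _, hkuniq⟩ := hτ.2 A₂ τ hτ.1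
    have h1 : (f.comp g).comp τ = τ := by
      rw [RingHom.comp_assoc, hg, hfσ']
    have h2 : (RingHom.id A₂).comp τ = τ := RingHom.id_comp τ
    rw [hkuniq _ h1, hkuniq _ h2]
  refine ⟨?_, ?_, ?_⟩
  · -- Nontrivial A₂
    refine ⟨0, 1, fun h01 => ?_⟩
    have : (0 : A) = 1 := by
      calc (0 : A) = g 0 := (map_zero g).symm
        _ = g 1 := by rw [h01]
        _ = 1 := map_one g
    exact zero_ne_one this
  · -- kernel description
    intro y
    constructor
    · intro hy
      obtain ⟨x, rfl⟩ := hπ y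
      refine ⟨x, rfl, ?_⟩
      have : σ x = g (τ (π x)) := by
        rw [← hσ'π x, hgτ]
      rw [this, hy, map_zero]
    · rintro ⟨x, rfl, hx⟩
      rw [← hfσ, hx, map_zero]
  · -- the isomorphism
    refine ⟨RingEquiv.ofRingHom g f hgf hfg, ?_⟩
    ext x
    show g (τ (π x)) = σ x
    rw [hgτ, hσ'π]
end

section
/- Let R be a ring, S a localizable subset with ass_R(S) = a, and T a localizable subset with ass_R(T) = b. Let π : R → R/a and denote S̄ = π(S), T̄ = π(T). Then R⟨S⁻¹⟩ and R⟨T⁻¹⟩ are R-isomorphic if and only if a = b, the image of S̄ in R⟨T⁻¹⟩ consists of units, and the image of T̄ in R⟨S⁻¹⟩ consists of units. -/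
universe u

/-- For localizable subsets `S, T` of `R`, the localizations `R⟨S⁻¹⟩` and
`R⟨T⁻¹⟩` are `R`-isomorphic iff `ass_R(S) = ass_R(T)`, the image of `S` in `R⟨T⁻¹⟩` consists
of units, and the image of `T` in `R⟨S⁻¹⟩` consists of units. -/
theorem localizations_isomorphic_iff {R A B : Type u} [Ring R] [Ring A] [Ring B]
    (S T : Set R) (σS : R →+* A) (σT : R →+* B)
    (hA : IsUniversalLocalization σS S) (hB : IsUniversalLocalization σT T)
    (hAnt : Nontrivial A) (hBnt : Nontrivial B) :
    (∃ e : A ≃+* B, (e : A →+* B).comp σS = σT) ↔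
      (RingHom.ker σS = RingHom.ker σT ∧
        (∀ s ∈ S, IsUnit (σT s)) ∧ ∀ t ∈ T, IsUnit (σS t)) := by
  constructor
  · rintro ⟨e, he⟩
    have hfun : ∀ x, e (σS x) = σT x := fun x => RingHom.congr_fun he x
    refine ⟨?_, ?_, ?_⟩
    · ext x
      simp only [RingHom.mem_ker]
      constructor
      · intro h
        rw [← hfun, h, map_zero]
      · intro h
        have : e (σS x) = e 0 := by rw [hfun, h, map_zero]
        exact e.injective this
    · intro s hs
      rw [← hfun]
      exact (e : A →+* B).isUnit_map (hA.1 s hs)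
    · intro t ht
      have : σS t = e.symm (σT t) := by rw [← hfun, RingEquiv.symm_apply_apply]
      rw [this]
      exact (e.symm : B →+* A).isUnit_map (hB.1 t ht)
  · rintro ⟨-, hST, hTS⟩
    obtain ⟨f, hf, -⟩ := hA.2 B σT hST
    obtain ⟨g, hg, -⟩ := hB.2 A σS hTS
    have hgf : g.comp f = RingHom.id A := by
      obtain ⟨h, -, huniq⟩ := hA.2 A σS hA.1
      have h1 : (g.comp f).comp σS = σS := by
        rw [RingHom.comp_assoc, hf, hg]
      have h2 : (RingHom.id A).comp σS = σS := RingHom.id_comp σS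
      rw [huniq _ h1, huniq _ h2]
    have hfg : f.comp g = RingHom.id B := by
      obtain ⟨h, -, huniq⟩ := hB.2 B σT hB.1
      have h1 : (f.comp g).comp σT = σT := by
        rw [RingHom.comp_assoc, hg, hf]
      have h2 : (RingHom.id B).comp σT = σT := RingHom.id_comp σT
      rw [huniq _ h1, huniq _ h2]
    exact ⟨RingEquiv.ofRingHom f g (by ext x; exact RingHom.congr_fun hfg x)
      (by ext x; exact RingHom.congr_fun hgf x), hf⟩
end

section
/- Let R be a ring, T a localizable subset of R, and S ⊆ T. Then S is localizable, ass_R(S) ⊆ ass_R(T), the image σ_S(T) is a localizable subset of R⟨S⁻¹⟩, and R⟨T⁻¹⟩ is R-isomorphic to (R⟨S⁻¹⟩)⟨σ_S(T)⁻¹⟩. -/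
universe u

/-- If `T` is localizable and `S ⊆ T`, then `S` is localizable,
`ass_R(S) ⊆ ass_R(T)`, `σ_S(T)` is a localizable subset of `R⟨S⁻¹⟩`, and `R⟨T⁻¹⟩` is
`R`-isomorphic to `(R⟨S⁻¹⟩)⟨σ_S(T)⁻¹⟩`. -/
theorem localizable_of_subset {R A B C : Type u} [Ring R] [Ring A] [Ring B] [Ring C]
    (S T : Set R) (hST : S ⊆ T)
    (σS : R →+* A) (hA : IsUniversalLocalization σS S)
    (σT : R →+* B) (hB : IsUniversalLocalization σT T) (hBnt : Nontrivial B)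
    (τ : A →+* C) (hC : IsUniversalLocalization τ (σS '' T)) :
    Nontrivial A ∧ RingHom.ker σS ≤ RingHom.ker σT ∧ Nontrivial C ∧
    ∃ e : B ≃+* C, (e : B →+* C).comp σT = τ.comp σS := by
  obtain ⟨hSunit, hAup⟩ := hA
  obtain ⟨hTunit, hBup⟩ := hB
  obtain ⟨hCunit, hCup⟩ := hC
  -- φ : A →+* B with φ ∘ σS = σT
  obtain ⟨φ, hφ, hφu⟩ := hAup B σT (fun s hs => hTunit s (hST hs))
  -- τ ∘ σS inverts T
  have hτσT : ∀ t ∈ T, IsUnit ((τ.comp σS) t) := fun t ht => hCunit _ ⟨t, ht, rfl⟩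
  obtain ⟨ψ, hψ, hψu⟩ := hBup C (τ.comp σS) hτσT
  -- φ inverts σS '' T
  have hφT : ∀ a ∈ σS '' T, IsUnit (φ a) := by
    rintro a ⟨t, ht, rfl⟩
    have h : φ (σS t) = σT t := by rw [← RingHom.comp_apply, hφ]
    rw [h]; exact hTunit t ht
  obtain ⟨g, hg, hgu⟩ := hCup B φ hφT
  -- g ∘ ψ = id
  obtain ⟨i, hi, hiu⟩ := hBup B σT hTunit
  have hgψ : g.comp ψ = RingHom.id B := by
    have h1 : (g.comp ψ).comp σT = σT := by
      rw [RingHom.comp_assoc, hψ, ← RingHom.comp_assoc, hg, hφ]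
    rw [hiu _ h1, hiu (RingHom.id B) (RingHom.id_comp σT)]
  -- ψ ∘ φ = τ
  obtain ⟨j, hj, hju⟩ := hAup C (τ.comp σS) (fun s hs => hτσT s (hST hs))
  have hψφ : ψ.comp φ = τ := by
    have h2 : (ψ.comp φ).comp σS = τ.comp σS := by
      rw [RingHom.comp_assoc, hφ, hψ]
    rw [hju _ h2, ← hju τ rfl]
  -- ψ ∘ g = id
  obtain ⟨k, hk, hku⟩ := hCup C τ hCunit
  have hψg : ψ.comp g = RingHom.id C := by
    have h3 : (ψ.comp g).comp τ = τ := by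
      rw [RingHom.comp_assoc, hg, hψφ]
    rw [hku _ h3, hku (RingHom.id C) (RingHom.id_comp τ)]
  refine ⟨φ.domain_nontrivial, ?_, g.domain_nontrivial, ?_⟩
  · intro x hx
    have hx0 : σS x = 0 := hx
    show σT x = 0
    rw [← hφ, RingHom.comp_apply, hx0, map_zero]
  · refine ⟨RingEquiv.ofRingHom ψ g (by ext x; exact congrFun (congrArg _ hψg) x)
      (by ext x; exact congrFun (congrArg _ hgψ) x), ?_⟩
    ext x
    show ψ (σT x) = τ (σS x)
    rw [← RingHom.comp_apply, hψ, RingHom.comp_apply]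
end

section
/- Let R be a ring, S a localizable subset of R with ass_R(S) = a, σ_S : R → R⟨S⁻¹⟩ the canonical map, and T := σ_S⁻¹(R⟨S⁻¹⟩^×). Then T is localizable with ass_R(T) = a, and R⟨T⁻¹⟩ is R-isomorphic to R⟨S⁻¹⟩. -/
universe u

/-- Let `S` be localizable with `ass_R(S) = a` and let
`T = σ_S⁻¹(R⟨S⁻¹⟩^×)`. Then `T` is localizable with `ass_R(T) = a`, and `R⟨T⁻¹⟩` is
`R`-isomorphic to `R⟨S⁻¹⟩`. -/
theorem localization_at_saturation {R A B : Type u} [Ring R] [Ring A] [Ring B]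
    (S : Set R) (a : Ideal R)
    (σ : R →+* A) (h : IsUniversalLocalization σ S) (hnt : Nontrivial A)
    (ha : RingHom.ker σ = a)
    (τ : R →+* B) (hτ : IsUniversalLocalization τ {r : R | IsUnit (σ r)}) :
    Nontrivial B ∧ RingHom.ker τ = a ∧ ∃ e : B ≃+* A, (e : B →+* A).comp τ = σ := by
  -- g : B →+* A with g ∘ τ = σ
  obtain ⟨g, hg, hg'⟩ := hτ.2 A σ (fun s hs => hs)
  -- f : A →+* B with f ∘ σ = τ
  obtain ⟨f, hf, hf'⟩ := h.2 B τ (by intro s hs; exact hτ.1 s (h.1 s hs))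
  -- uniqueness at A: endomorphisms commuting with σ are unique
  obtain ⟨k, hk, hk'⟩ := hτ.2 B τ hτ.1
  obtain ⟨k', hk2, hk2'⟩ := h.2 A σ h.1
  have hfg : f.comp g = RingHom.id B := by
    have h1 : (f.comp g).comp τ = τ := by
      rw [RingHom.comp_assoc, hg, hf]
    exact (hk' _ h1).trans (hk' _ (by simp)).symm
  have hgf : g.comp f = RingHom.id A := by
    have h1 : (g.comp f).comp σ = σ := by
      rw [RingHom.comp_assoc, hf, hg]
    exact (hk2' _ h1).trans (hk2' _ (by simp)).symm
  let e : B ≃+* A := RingEquiv.ofRingHom g f hgf hfg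
  have hginj : Function.Injective g := e.injective
  refine ⟨e.toEquiv.nontrivial, ?_, e, hg⟩
  rw [← ha]
  ext x
  simp only [RingHom.mem_ker]
  constructor
  · intro hx
    rw [← hg, RingHom.comp_apply, hx, map_zero]
  · intro hx
    apply hginj
    rw [← RingHom.comp_apply, hg, hx, map_zero]
end

section
/- Let R be a simple Artinian ring. Then the set of localizable elements of R is exactly the group of units R^×, and R^× is the unique maximal localizable set of R. -/
universe u

/-- A subset `S` of a ring `R` is *localizable* if the universal localization `R⟨S⁻¹⟩` is
nonzero; equivalently, there exists a ring homomorphism from `R` to some nonzero ring sending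
every element of `S` to a unit. -/
def IsLocalizable {R : Type u} [Ring R] (S : Set R) : Prop :=
  ∃ (B : RingCat.{u}) (f : R →+* B), Nontrivial B ∧ ∀ s ∈ S, IsUnit (f s)

/-- In a simple Artinian ring, an element mapped to a unit by a ring hom to a nontrivial
ring is itself a unit. -/
lemma isUnit_of_map_isUnit {R : Type u} [Ring R] [IsSimpleRing R] [IsArtinianRing R]
    {B : Type u} [Ring B] [Nontrivial B] (f : R →+* B) {r : R} (h : IsUnit (f r)) :
    IsUnit r := by
  have hinj : Function.Injective f := f.injective
  -- right multiplication by r is injective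
  have hmr : Function.Injective (LinearMap.toSpanSingleton R R r) := by
    intro x y hxy
    apply hinj
    have : f x * f r = f y * f r := by
      simpa [LinearMap.toSpanSingleton_apply, smul_eq_mul, ← map_mul] using congrArg f hxy
    exact h.mul_right_cancel this
  obtain ⟨u, hu⟩ := IsArtinian.surjective_of_injective_endomorphism _ hmr 1
  simp only [LinearMap.toSpanSingleton_apply, smul_eq_mul] at hu
  -- hu : u * r = 1
  have hru : r * u = 1 := by
    have h0 : (r * u - 1) * r = 0 := by
      rw [sub_mul, one_mul, mul_assoc, hu, mul_one, sub_self]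
    have : f (r * u - 1) * f r = 0 := by rw [← map_mul, h0, map_zero]
    have : f (r * u - 1) = 0 := by
      rcases h with ⟨v, hv⟩
      calc f (r * u - 1) = f (r * u - 1) * f r * (v⁻¹ : Bˣ) := by
            rw [← hv, mul_assoc, Units.mul_inv, mul_one]
        _ = 0 := by rw [this, zero_mul]
    have h1 : r * u - 1 = 0 := hinj (by rw [this, map_zero])
    exact sub_eq_zero.mp h1
  exact ⟨⟨r, u, hru, hu⟩, rfl⟩

lemma localizable_subset_units {R : Type u} [Ring R] [IsSimpleRing R] [IsArtinianRing R]
    {T : Set R} (hT : IsLocalizable T) : T ⊆ {r : R | IsUnit r} := by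
  obtain ⟨B, f, hB, hf⟩ := hT
  intro t ht
  exact isUnit_of_map_isUnit f (hf t ht)

lemma units_localizable {R : Type u} [Ring R] [IsSimpleRing R] :
    IsLocalizable {r : R | IsUnit r} := by
  have : Nontrivial R := by infer_instance
  exact ⟨RingCat.of R, RingHom.id R, ‹Nontrivial R›, fun s hs => hs⟩

/-- In a simple Artinian ring `R`, the localizable elements are exactly the
units, and `R^×` is the unique maximal localizable set. -/
theorem simple_artinian_localizable_elements {R : Type u} [Ring R]
    [IsSimpleRing R] [IsArtinianRing R] :
    {r : R | IsLocalizable {r}} = {r : R | IsUnit r} ∧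
    IsLocalizable {r : R | IsUnit r} ∧
    (∀ T : Set R, IsLocalizable T → {r : R | IsUnit r} ⊆ T → T = {r : R | IsUnit r}) ∧
    (∀ V : Set R, IsLocalizable V → (∀ T : Set R, IsLocalizable T → V ⊆ T → T = V) →
      V = {r : R | IsUnit r}) := by
  have hN : Nontrivial R := by infer_instance
  refine ⟨?_, units_localizable, ?_, ?_⟩
  · ext r
    constructor
    · intro hr
      exact localizable_subset_units hr rfl
    · intro hr
      exact ⟨RingCat.of R, RingHom.id R, ‹Nontrivial R›, fun s hs => by rwa [Set.mem_singleton_iff.mp hs]⟩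
  · intro T hT hsub
    exact subset_antisymm (localizable_subset_units hT) hsub
  · intro V hV hmax
    exact (hmax _ units_localizable (localizable_subset_units hV)).symm
end

section
/- Let R be a commutative reduced ring. Then R is a Goldie ring (equivalently, its classical quotient ring is a finite product of fields) if and only if R has only finitely many minimal prime ideals. -/
universe u

open nonZeroDivisors

/-- In a reduced commutative ring, every minimal prime consists of zero-divisors. -/
lemma aux_minimalPrime_disjoint_nonZeroDivisors {R : Type u} [CommRing R] [IsReduced R]
    {p : Ideal R} (hp : p ∈ minimalPrimes R) :
    Disjoint (R⁰ : Set R) (p : Set R) := by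
  have hpp : p.IsPrime := hp.1.1
  rw [Set.disjoint_right]
  intro x hxp hxn
  have h1 : IsNilpotent (algebraMap R (Localization p.primeCompl) x) :=
    by
      have hsub := IsLocalization.subsingleton_primeSpectrum_of_mem_minimalPrimes p hp
        (Localization p.primeCompl)
      rw [← mem_nilradical, nilradical_eq_sInf, Submodule.mem_sInf]
      intro J hJ
      have hJm : J = IsLocalRing.maximalIdeal _ := congrArg PrimeSpectrum.asIdeal
        (Subsingleton.elim (⟨J, hJ⟩ : PrimeSpectrum _) ⟨_, (IsLocalRing.maximalIdeal.isMaximal _).isPrime⟩)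
      rw [hJm, ← Localization.AtPrime.map_eq_maximalIdeal]
      exact Ideal.mem_map_of_mem _ hxp
  have h0 : algebraMap R (Localization p.primeCompl) x = 0 := h1.eq_zero
  obtain ⟨m, hm⟩ := (IsLocalization.map_eq_zero_iff p.primeCompl
    (Localization p.primeCompl) x).mp h0
  have : (m : R) = 0 := mem_nonZeroDivisors_iff_right.mp hxn _ hm
  exact m.2 (this ▸ p.zero_mem)

/-- In a reduced commutative ring, every zero-divisor lies in some minimal prime. -/
lemma aux_exists_minimalPrime_of_not_mem_nonZeroDivisors {R : Type u} [CommRing R] [IsReduced R]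
    {x : R} (hx : x ∉ R⁰) : ∃ p ∈ minimalPrimes R, x ∈ p := by
  rw [mem_nonZeroDivisors_iff_right] at hx
  push_neg at hx
  obtain ⟨a, ha0, ha⟩ := hx
  have hsinf : sInf (minimalPrimes R) = ⊥ := by
    have h := Ideal.sInf_minimalPrimes (I := (⊥ : Ideal R))
    rw [show (⊥ : Ideal R).radical = nilradical R from rfl, nilradical_eq_zero] at h
    exact h
  have : a ∉ sInf (minimalPrimes R) := by rw [hsinf]; exact ha
  rw [Submodule.mem_sInf] at this
  push_neg at this
  obtain ⟨p, hp, hap⟩ := this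
  have hpp : Ideal.IsPrime p := hp.1.1
  refine ⟨p, hp, ?_⟩
  have : a * x ∈ p := ha0 ▸ p.zero_mem
  exact (hpp.mem_or_mem this).resolve_left hap


/-- A reduced commutative ring with finitely many primes, all maximal, is semisimple. -/
lemma aux_semisimple_of_primes {S : Type u} [CommRing S] [IsReduced S]
    (hQfin : {P : Ideal S | P.IsPrime}.Finite)
    (hmax : ∀ (P : Ideal S), P.IsPrime → P.IsMaximal) : IsSemisimpleRing S := by
  classical
  have hmaxfin : {I : Ideal S | I.IsMaximal}.Finite :=
    hQfin.subset fun I hI => hI.isPrime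
  haveI : Finite {I : Ideal S | I.IsMaximal} := hmaxfin.to_subtype
  have hbot : (⊥ : Ideal S) = ⨅ I : {I : Ideal S | I.IsMaximal}, I.1 := by
    have h1 : nilradical S = ⊥ := nilradical_eq_zero S
    have h2 := nilradical_eq_sInf S
    have h3 : {J : Ideal S | J.IsPrime} = {I : Ideal S | I.IsMaximal} :=
      Set.ext fun I => ⟨fun hI => hmax I hI, fun hI => hI.isPrime⟩
    rw [← h1, h2, h3, sInf_eq_iInf']
  letI : ∀ I : {I : Ideal S | I.IsMaximal}, Field (S ⧸ I.1) :=
    fun I => have := Set.mem_setOf.mp I.2; Ideal.Quotient.field I.1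
  have e : S ≃+* ∀ I : {I : Ideal S | I.IsMaximal}, S ⧸ I.1 :=
    (RingEquiv.quotientBot S).symm.trans <|
      (Ideal.quotEquivOfEq hbot).trans <|
        Ideal.quotientInfRingEquivPiQuotient _ fun I J h =>
          Ideal.isCoprime_iff_sup_eq.mpr <| I.2.coprime_of_ne J.2 <| by
            rwa [Ne, Subtype.coe_inj]
  exact e.symm.isSemisimpleRing

/-- A commutative reduced ring `R` is a Goldie ring — equivalently, its
classical quotient ring is a finite product of fields, i.e. a semisimple ring — if and only if
`R` has only finitely many minimal prime ideals. -/
theorem commutative_reduced_goldie_iff {R : Type u} [CommRing R] [IsReduced R] :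
    IsSemisimpleRing (FractionRing R) ↔ (minimalPrimes R).Finite := by
  set Q := FractionRing R
  constructor
  · intro h
    haveI : IsArtinianRing Q := inferInstance
    have hfin := IsArtinianRing.setOfPred_isPrime_finite Q
    refine (hfin.image (Ideal.comap (algebraMap R Q))).subset ?_
    intro p hp
    have hpp : p.IsPrime := hp.1.1
    have hd := aux_minimalPrime_disjoint_nonZeroDivisors hp
    have hprime : (Ideal.map (algebraMap R Q) p).IsPrime :=
      IsLocalization.isPrime_of_isPrime_disjoint R⁰ Q p hpp hd
    exact ⟨Ideal.map (algebraMap R Q) p, hprime,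
      IsLocalization.comap_map_of_isPrime_disjoint R⁰ Q hpp hd⟩
  · intro hfin
    classical
    haveI : IsReduced Q := inferInstance
    -- every prime of Q pulls back to a minimal prime of R
    have key : ∀ (P : Ideal Q), P.IsPrime → Ideal.comap (algebraMap R Q) P ∈ minimalPrimes R := by
      intro P hP
      have hq := (IsLocalization.isPrime_iff_isPrime_disjoint R⁰ Q P).mp hP
      set q := Ideal.comap (algebraMap R Q) P with hqdef
      have hqp : q.IsPrime := hq.1
      have hd : Disjoint (R⁰ : Set R) (q : Set R) := hq.2
      have hsub : (q : Set R) ⊆ ⋃ p ∈ hfin.toFinset, (p : Set R) := by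
        intro x hxq
        have hx : x ∉ R⁰ := fun hxn => Set.disjoint_left.mp hd hxn hxq
        obtain ⟨p, hp, hxp⟩ := aux_exists_minimalPrime_of_not_mem_nonZeroDivisors hx
        exact Set.mem_biUnion (hfin.mem_toFinset.mpr hp) hxp
      obtain ⟨p, hps, hqle⟩ := (Ideal.subset_union_prime (⊤ : Ideal R) ⊤
        (fun i hi _ _ => (hfin.mem_toFinset.mp hi).1.1)).mp hsub
      have hp := hfin.mem_toFinset.mp hps
      have : p ≤ q := hp.2 ⟨hqp, bot_le⟩ hqle
      rwa [le_antisymm hqle this]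
    -- primes of Q are finite
    have hQfin : {P : Ideal Q | P.IsPrime}.Finite := by
      refine (hfin.image (Ideal.map (algebraMap R Q))).subset ?_
      intro P hP
      exact ⟨Ideal.comap (algebraMap R Q) P, key P hP,
        IsLocalization.map_comap R⁰ Q P⟩
    -- every prime of Q is maximal
    have hmax : ∀ (P : Ideal Q), P.IsPrime → P.IsMaximal := by
      intro P hP
      obtain ⟨m, hm, hPm⟩ := Ideal.exists_le_maximal P hP.ne_top
      have hmP : m.IsPrime := hm.isPrime
      have h1 := key P hP
      have h2 := key m hmP
      have hle : Ideal.comap (algebraMap R Q) P ≤ Ideal.comap (algebraMap R Q) m :=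
        Ideal.comap_mono hPm
      have heq : Ideal.comap (algebraMap R Q) m = Ideal.comap (algebraMap R Q) P :=
        le_antisymm (h2.2 ⟨h1.1.1, bot_le⟩ hle) hle
      have : P = m := by
        rw [← IsLocalization.map_comap R⁰ Q P, ← IsLocalization.map_comap R⁰ Q m]
        exact congrArg _ heq.symm
      rwa [this]
    exact aux_semisimple_of_primes hQfin hmax
end

section
/- Let A = A_1 × ⋯ × A_s be a finite direct product of rings, S ⊆ A a subset, and S_i = p_i(S) the image of S under the i-th projection. Then the universal localization A⟨S⁻¹⟩ is A-isomorphic to the product ∏_{i=1}^s A_i⟨S_i⁻¹⟩; consequently ass_A(S) = ∏_{i=1}^s ass_{A_i}(S_i), and S is localizable if and only if S_i is localizable for at least one i. -/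
universe u

section Helpers

lemma pi_isUnit_iff {ι : Type u} (A : ι → Type u) [∀ i, Ring (A i)] (a : ∀ i, A i) :
    IsUnit a ↔ ∀ i, IsUnit (a i) := by
  constructor
  · intro h i
    exact h.map (Pi.evalRingHom A i)
  · intro h
    refine ⟨⟨a, fun i => ((h i).unit⁻¹ : _), ?_, ?_⟩, rfl⟩ <;>
      funext i <;> simp

/-- The corner set `ε D ε` as a non-unital subring. -/
def cornerSet {D : Type u} [Ring D] (ε : D) : NonUnitalSubring D where
  carrier := {d | ε * d = d ∧ d * ε = d}
  add_mem' := fun {a b} ha hb => ⟨by rw [mul_add, ha.1, hb.1], by rw [add_mul, ha.2, hb.2]⟩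
  zero_mem' := ⟨mul_zero ε, zero_mul ε⟩
  neg_mem' := fun {a} ha => ⟨by rw [mul_neg, ha.1], by rw [neg_mul, ha.2]⟩
  mul_mem' := fun {a b} ha hb => ⟨by rw [← mul_assoc, ha.1], by rw [mul_assoc, hb.2]⟩

lemma mem_cornerSet {D : Type u} [Ring D] (ε d : D) :
    d ∈ cornerSet ε ↔ ε * d = d ∧ d * ε = d := Iff.rfl

/-- The corner ring `ε D ε` for an idempotent `ε`, with unit `ε`. -/
def cornerRing {D : Type u} [Ring D] (ε : D) (hε : ε * ε = ε) : Ring (cornerSet ε) :=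
  { (inferInstance : NonUnitalRing (cornerSet ε)) with
    one := ⟨ε, hε, hε⟩
    one_mul := fun a => Subtype.ext a.2.1
    mul_one := fun a => Subtype.ext a.2.2 }

end Helpers

section PiUniv

set_option linter.unusedSectionVars false

variable {ι : Type u} [Fintype ι] [DecidableEq ι]
  (A : ι → Type u) [∀ i, Ring (A i)] (S : Set (∀ i, A i))
  (C : ι → Type u) [∀ i, Ring (C i)] (τ : ∀ i, A i →+* C i)

lemma single_one_mul (i : ι) (a : ∀ j, A j) :
    Pi.single i (1 : A i) * a = Pi.single i (a i) := by
  funext j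
  by_cases h : j = i
  · subst h; simp [Pi.single_eq_same]
  · simp [Pi.single_eq_of_ne h]

lemma mul_single_one (i : ι) (a : ∀ j, A j) :
    a * Pi.single i (1 : A i) = Pi.single i (a i) := by
  funext j
  by_cases h : j = i
  · subst h; simp [Pi.single_eq_same]
  · simp [Pi.single_eq_of_ne h]

lemma single_mul_single_ne {i j : ι} (h : i ≠ j) (x : A i) (y : A j) :
    (Pi.single i x : ∀ k, A k) * Pi.single j y = 0 := by
  funext k
  simp only [Pi.mul_apply, Pi.zero_apply]
  rcases eq_or_ne k i with rfl | hk
  · rw [Pi.single_eq_of_ne h, mul_zero]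
  · rw [Pi.single_eq_of_ne hk, zero_mul]

/-- The canonical map `∏ A i → ∏ C i` is a universal localization of `S` when each
`τ i` is a universal localization of the projection of `S`. -/
theorem pi_isUniversalLocalization
    (hτ : ∀ i, IsUniversalLocalization (τ i) ((fun a => a i) '' S)) :
    IsUniversalLocalization (Pi.ringHom (fun i => (τ i).comp (Pi.evalRingHom A i))) S := by
  set π : (∀ i, A i) →+* (∀ i, C i) :=
    Pi.ringHom (fun i => (τ i).comp (Pi.evalRingHom A i)) with hπdef
  have hπ : ∀ a : ∀ i, A i, ∀ i, π a i = τ i (a i) := fun a i => rfl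
  constructor
  · intro s hs
    rw [pi_isUnit_iff]
    intro i
    exact (hτ i).1 (s i) ⟨s, hs, rfl⟩
  · intro D _ f hf
    -- the idempotents
    set ε : ι → D := fun i => f (Pi.single i 1) with hεdef
    have hidem : ∀ i, ε i * ε i = ε i := by
      intro i
      show f (Pi.single i 1) * f (Pi.single i 1) = f (Pi.single i 1)
      rw [← map_mul, single_one_mul, Pi.single_eq_same]
    have horth : ∀ i j, i ≠ j → ε i * ε j = 0 := by
      intro i j hij
      show f (Pi.single i 1) * f (Pi.single j 1) = 0
      rw [← map_mul, single_mul_single_ne A hij, map_zero]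
    have hsum : ∑ i, ε i = 1 := by
      show (∑ i, f (Pi.single i 1)) = 1
      rw [← map_sum]
      have : (∑ i, Pi.single i (1 : A i)) = (1 : ∀ i, A i) := Finset.univ_sum_single _
      rw [this, map_one]
    have hcormem : ∀ i (x : A i), f (Pi.single i x) ∈ cornerSet (ε i) := by
      intro i x
      constructor
      · show f (Pi.single i 1) * f (Pi.single i x) = f (Pi.single i x)
        rw [← map_mul, single_one_mul, Pi.single_eq_same]
      · show f (Pi.single i x) * f (Pi.single i 1) = f (Pi.single i x)
        rw [← map_mul, mul_single_one, Pi.single_eq_same]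
    -- the component maps into corner rings
    letI cRing : ∀ i, Ring (cornerSet (ε i)) := fun i => cornerRing (ε i) (hidem i)
    let fi : ∀ i, A i →+* cornerSet (ε i) := fun i =>
      { toFun := fun x => ⟨f (Pi.single i x), hcormem i x⟩
        map_one' := rfl
        map_mul' := fun x y => Subtype.ext (by
          show f (Pi.single i (x * y)) = f (Pi.single i x) * f (Pi.single i y)
          rw [Pi.single_mul, map_mul])
        map_zero' := Subtype.ext (by show f (Pi.single i 0) = 0; simp)
        map_add' := fun x y => Subtype.ext (by
          show f (Pi.single i (x + y)) = f (Pi.single i x) + f (Pi.single i y)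
          rw [Pi.single_add, map_add]) }
    have hfival : ∀ i (x : A i), ((fi i) x : D) = f (Pi.single i x) := fun i x => rfl
    -- each fi inverts the projected set
    have hfi_inv : ∀ i, ∀ c ∈ ((fun a => a i) '' S), IsUnit ((fi i) c) := by
      rintro i _ ⟨s, hs, rfl⟩
      obtain ⟨U, hU⟩ := hf s hs
      set u : D := f s with hudef
      set v : D := ((U⁻¹ : Dˣ) : D) with hvdef
      have huv : u * v = 1 := by rw [← hU]; exact U.mul_inv
      have hvu : v * u = 1 := by rw [← hU]; exact U.inv_mul
      have hcomm : ε i * u = u * ε i := by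
        show f (Pi.single i 1) * f s = f s * f (Pi.single i 1)
        rw [← map_mul, ← map_mul, single_one_mul, mul_single_one]
      have hcomm' : ε i * v = v * ε i := by
        calc ε i * v = v * u * (ε i * v) := by rw [hvu, one_mul]
          _ = v * (u * ε i) * v := by noncomm_ring
          _ = v * (ε i * u) * v := by rw [hcomm]
          _ = v * ε i * (u * v) := by noncomm_ring
          _ = v * ε i := by rw [huv, mul_one]
      have hval : ((fi i) (s i) : D) = ε i * u := by
        show f (Pi.single i (s i)) = f (Pi.single i 1) * f s
        rw [← map_mul, single_one_mul]
      have hval' : ((fi i) (s i) : D) = u * ε i := by rw [hval, hcomm]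
      have hmem : ε i * v * ε i ∈ cornerSet (ε i) := by
        constructor
        · rw [← mul_assoc, ← mul_assoc, hidem i]
        · rw [mul_assoc, mul_assoc, hidem i, ← mul_assoc]
      have g1 : ((fi i) (s i) : D) * (ε i * v * ε i) = ε i := by
        rw [hval']
        calc u * ε i * (ε i * v * ε i)
            = u * (ε i * ε i) * (v * ε i) := by noncomm_ring
          _ = u * ε i * (v * ε i) := by rw [hidem i]
          _ = u * (ε i * v) * ε i := by noncomm_ring
          _ = u * (v * ε i) * ε i := by rw [hcomm']
          _ = u * v * (ε i * ε i) := by noncomm_ring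
          _ = 1 * ε i := by rw [huv, hidem i]
          _ = ε i := one_mul _
      have g2 : (ε i * v * ε i) * ((fi i) (s i) : D) = ε i := by
        rw [hval]
        calc ε i * v * ε i * (ε i * u)
            = ε i * v * (ε i * ε i) * u := by noncomm_ring
          _ = ε i * v * ε i * u := by rw [hidem i]
          _ = ε i * (v * ε i) * u := by noncomm_ring
          _ = ε i * (ε i * v) * u := by rw [hcomm']
          _ = ε i * ε i * (v * u) := by noncomm_ring
          _ = ε i * 1 := by rw [hvu, hidem i]
          _ = ε i := mul_one _
      exact ⟨⟨(fi i) (s i), ⟨ε i * v * ε i, hmem⟩, Subtype.ext g1, Subtype.ext g2⟩, rfl⟩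
    -- obtain the unique factorizations
    have hg : ∀ i, ∃! g : C i →+* cornerSet (ε i), g.comp (τ i) = fi i := fun i =>
      (hτ i).2 (cornerSet (ε i)) (fi i) (hfi_inv i)
    choose g hg1 hg2 using hg
    have hgτ : ∀ i (x : A i), (g i) (τ i x) = (fi i) x := fun i x => by
      rw [← RingHom.comp_apply, hg1 i]
    -- orthogonality of corner elements
    have hcross : ∀ (i j : ι), i ≠ j → ∀ (x : cornerSet (ε i)) (y : cornerSet (ε j)),
        (x : D) * (y : D) = 0 := by
      intro i j hij x y
      have hx : (x : D) * ε i = (x : D) := x.2.2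
      have hy : ε j * (y : D) = (y : D) := y.2.1
      rw [← hx, ← hy, mul_assoc, ← mul_assoc (ε i), horth i j hij, zero_mul, mul_zero]
    -- the glued map
    refine ⟨{ toFun := fun c => ∑ i, ((g i) (c i) : D)
              map_one' := ?_
              map_mul' := ?_
              map_zero' := ?_
              map_add' := ?_ }, ?_, ?_⟩
    · have h1 : ∀ i, ((g i) ((1 : ∀ i, C i) i) : D) = ε i := fun i => by
        show ((g i) 1 : D) = ε i
        rw [map_one]
        rfl
      show (∑ i, ((g i) ((1 : ∀ i, C i) i) : D)) = 1
      rw [Finset.sum_congr rfl fun i _ => h1 i, hsum]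
    · intro c d
      show (∑ i, ((g i) ((c * d) i) : D)) = (∑ i, ((g i) (c i) : D)) * ∑ j, ((g j) (d j) : D)
      rw [Finset.sum_mul_sum]
      rw [Finset.sum_congr rfl (fun i _ => Finset.sum_eq_single_of_mem i (Finset.mem_univ i)
        (fun j _ hji => hcross i j (Ne.symm hji) _ _))]
      refine Finset.sum_congr rfl fun i _ => ?_
      show ((g i) (c i * d i) : D) = _
      rw [map_mul]
      rfl
    · show (∑ i, ((g i) ((0 : ∀ i, C i) i) : D)) = 0
      refine Finset.sum_eq_zero fun i _ => ?_
      show ((g i) 0 : D) = 0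
      rw [map_zero]
      rfl
    · intro c d
      show (∑ i, ((g i) ((c + d) i) : D)) = _
      refine (Finset.sum_congr rfl fun i _ => ?_).trans Finset.sum_add_distrib
      show ((g i) (c i + d i) : D) = _
      rw [map_add]
      rfl
    · apply RingHom.ext
      intro a
      show (∑ i, ((g i) (π a i) : D)) = f a
      have h2 : ∀ i, ((g i) (π a i) : D) = f (Pi.single i (a i)) := by
        intro i
        rw [hπ, hgτ, hfival]
      rw [Finset.sum_congr rfl fun i _ => h2 i, ← map_sum, Finset.univ_sum_single]
    · -- uniqueness
      intro G' hG'
      apply RingHom.ext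
      intro c
      have hπsingle : ∀ i (x : A i), π (Pi.single i x) = Pi.single i (τ i x) := by
        intro i x
        funext j
        rw [hπ]
        by_cases h : j = i
        · subst h; simp [Pi.single_eq_same]
        · simp [Pi.single_eq_of_ne h]
      have hG'π : ∀ a : ∀ i, A i, G' (π a) = f a := fun a => by
        rw [← RingHom.comp_apply, hG']
      have hε' : ∀ i, G' (Pi.single i (1 : C i)) = ε i := by
        intro i
        have h1 : π (Pi.single i (1 : A i)) = Pi.single i (1 : C i) := by
          rw [hπsingle, map_one]
        calc G' (Pi.single i (1 : C i)) = G' (π (Pi.single i 1)) := by rw [h1]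
          _ = f (Pi.single i 1) := hG'π _
          _ = ε i := rfl
      have hmem' : ∀ i (x : C i), G' (Pi.single i x) ∈ cornerSet (ε i) := by
        intro i x
        constructor
        · rw [← hε' i, ← map_mul, single_one_mul, Pi.single_eq_same]
        · rw [← hε' i, ← map_mul, mul_single_one, Pi.single_eq_same]
      let gi' : ∀ i, C i →+* cornerSet (ε i) := fun i =>
        { toFun := fun x => ⟨G' (Pi.single i x), hmem' i x⟩
          map_one' := Subtype.ext (hε' i)
          map_mul' := fun x y => Subtype.ext (by
            show G' (Pi.single i (x * y)) = G' (Pi.single i x) * G' (Pi.single i y)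
            rw [Pi.single_mul, map_mul])
          map_zero' := Subtype.ext (by show G' (Pi.single i 0) = 0; simp)
          map_add' := fun x y => Subtype.ext (by
            show G' (Pi.single i (x + y)) = G' (Pi.single i x) + G' (Pi.single i y)
            rw [Pi.single_add, map_add]) }
      have hgi' : ∀ i, gi' i = g i := by
        intro i
        apply hg2 i
        apply RingHom.ext
        intro x
        apply Subtype.ext
        show G' (Pi.single i (τ i x)) = ((fi i) x : D)
        rw [← hπsingle, hG'π, hfival]
      calc G' c = G' (∑ i, Pi.single i (c i)) := by rw [Finset.univ_sum_single]
        _ = ∑ i, G' (Pi.single i (c i)) := map_sum _ _ _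
        _ = ∑ i, ((gi' i) (c i) : D) := rfl
        _ = ∑ i, ((g i) (c i) : D) := by
            refine Finset.sum_congr rfl fun i _ => ?_
            rw [hgi' i]

end PiUniv

/-- Let `A = A_1 × ⋯ × A_s` be a finite direct product of rings, `S ⊆ A`, and
`S_i = p_i(S)`. Then `A⟨S⁻¹⟩` is `A`-isomorphic to `∏ A_i⟨S_i⁻¹⟩`, `ass_A(S) = ∏ ass_{A_i}(S_i)`,
and `S` is localizable iff some `S_i` is localizable. -/
theorem localization_of_finite_product {ι : Type u} [Fintype ι]
    (A : ι → Type u) [∀ i, Ring (A i)] (S : Set (∀ i, A i))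
    (B : Type u) [Ring B] (σ : (∀ i, A i) →+* B) (hB : IsUniversalLocalization σ S)
    (C : ι → Type u) [∀ i, Ring (C i)] (τ : ∀ i, A i →+* C i)
    (hτ : ∀ i, IsUniversalLocalization (τ i) ((fun a => a i) '' S)) :
    (∃ e : B ≃+* (∀ i, C i),
      (e : B →+* ∀ i, C i).comp σ = Pi.ringHom (fun i => (τ i).comp (Pi.evalRingHom A i))) ∧
    (∀ a : ∀ i, A i, σ a = 0 ↔ ∀ i, τ i (a i) = 0) ∧
    (Nontrivial B ↔ ∃ i, Nontrivial (C i)) := by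
  classical
  set π : (∀ i, A i) →+* (∀ i, C i) :=
    Pi.ringHom (fun i => (τ i).comp (Pi.evalRingHom A i)) with hπdef
  have hπuniv : IsUniversalLocalization π S := pi_isUniversalLocalization A S C τ hτ
  obtain ⟨φ, hφ, hφu⟩ := hB.2 (∀ i, C i) π hπuniv.1
  obtain ⟨ψ, hψ, hψu⟩ := hπuniv.2 B σ hB.1
  have h1 : φ.comp ψ = RingHom.id _ := by
    obtain ⟨χ, hχ, hχu⟩ := hπuniv.2 (∀ i, C i) π hπuniv.1
    have e1 : (φ.comp ψ).comp π = π := by rw [RingHom.comp_assoc, hψ, hφ]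
    have e2 : (RingHom.id _).comp π = π := by rw [RingHom.id_comp]
    rw [hχu _ e1, hχu _ e2]
  have h2 : ψ.comp φ = RingHom.id _ := by
    obtain ⟨χ, hχ, hχu⟩ := hB.2 B σ hB.1
    have e1 : (ψ.comp φ).comp σ = σ := by rw [RingHom.comp_assoc, hφ, hψ]
    have e2 : (RingHom.id _).comp σ = σ := by rw [RingHom.id_comp]
    rw [hχu _ e1, hχu _ e2]
  set e : B ≃+* (∀ i, C i) := RingEquiv.ofRingHom φ ψ h1 h2 with hedef
  have hecoe : (e : B →+* ∀ i, C i) = φ := RingEquiv.coe_ringHom_ofRingHom φ ψ h1 h2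
  have hφσ : ∀ a, φ (σ a) = π a := fun a => by rw [← RingHom.comp_apply, hφ]
  refine ⟨⟨e, by rw [hecoe, hφ]⟩, ?_, ?_⟩
  · intro a
    have hinj : Function.Injective φ := by
      intro x y hxy
      calc x = (ψ.comp φ) x := by rw [h2]; rfl
        _ = (ψ.comp φ) y := by simp only [RingHom.comp_apply, hxy]
        _ = y := by rw [h2]; rfl
    constructor
    · intro h i
      have h0 : π a = 0 := by rw [← hφσ, h, map_zero]
      exact congrFun h0 i
    · intro h
      apply hinj
      rw [hφσ, map_zero]
      exact funext h
  · have hnt : Nontrivial B ↔ Nontrivial (∀ i, C i) := by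
      constructor
      · rintro ⟨x, y, hxy⟩
        exact ⟨e x, e y, fun h => hxy (e.injective h)⟩
      · rintro ⟨x, y, hxy⟩
        exact ⟨e.symm x, e.symm y, fun h => hxy (e.symm.injective h)⟩
    rw [hnt]
    constructor
    · rintro ⟨x, y, hxy⟩
      have : ∃ i, x i ≠ y i := by
        by_contra h
        push_neg at h
        exact hxy (funext h)
      obtain ⟨i, hi⟩ := this
      exact ⟨i, ⟨x i, y i, hi⟩⟩
    · rintro ⟨i, ⟨x, y, hxy⟩⟩
      refine ⟨Pi.single i x, Pi.single i y, fun h => hxy ?_⟩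
      have := congrFun h i
      rwa [Pi.single_eq_same, Pi.single_eq_same] at this
end
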